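/- If τ > 0 satisfies the CFL condition, then for each σ = 1, 2, 3 the matrix I − (τ/2)M_σ is nonsingular and monotone: whenever (I − (τ/2)M_σ)x ≥ 0 entrywise for a vector x, then x ≥ 0 entrywise; equivalently, every entry of (I − (τ/2)M_σ)^{−1} is nonnegative. -/

import Mathlib

/-!
Each `M_σ` is a nonnegative diagonal scaling of a Kronecker product of identities with one
tridiagonal matrix `T_σ`. The off-diagonal entries of `T_σ` are nonnegative and its row sums
are nonpositive: the three weights of an interior row sum to zero, and a boundary row loses
one positive weight. Both sign conditions survive Kronecker products with identities, left
multiplication by a nonnegative diagonal matrix and nonnegative scaling, so `A = I − (τ/2)M_σ`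
has nonpositive off-diagonal entries and row sums at least `1`. At a minimal entry `x p` of a
vector `x`, `(A x)_p ≤ (∑_r A_{p r}) x_p`, so `A x ≥ 0` forces `x ≥ 0`. Monotonicity makes
`A` injective, hence invertible, and the columns `A⁻¹ e_r` are nonnegative because
`A (A⁻¹ e_r) = e_r`.
-/

open Matrix
open scoped Kronecker

noncomputable section

namespace Kawarada

/-- The spectral norm (largest singular value) of a real matrix:
the operator norm of the induced map between Euclidean spaces. -/
noncomputable def specNorm {m : Type*} [Fintype m] [DecidableEq m]
    (A : Matrix m m ℝ) : ℝ :=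
  ‖LinearMap.toContinuousLinearMap (Matrix.toEuclideanLin A)‖

/-- The `N × N` tridiagonal matrix `T` built from mesh steps `h 0, …, h N`.
Lean row/column index `i : Fin N` corresponds to the paper's index `i + 1`. -/
noncomputable def tridiag (N : ℕ) (h : ℕ → ℝ) : Matrix (Fin N) (Fin N) ℝ :=
  Matrix.of fun i p =>
    if (i : ℕ) = (p : ℕ) then -2 / (h i * h ((i : ℕ) + 1))
    else if (i : ℕ) = (p : ℕ) + 1 then 2 / (h i * (h i + h ((i : ℕ) + 1)))
    else if (p : ℕ) = (i : ℕ) + 1 then 2 / (h ((i : ℕ) + 1) * (h i + h ((i : ℕ) + 1)))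
    else 0

/-- `φ_{i,j,k}` for the paper's indices `i,j,k ≥ 1`. -/
noncomputable def phi (a b c q : ℝ) (h1 h2 h3 : ℕ → ℝ) (i j k : ℕ) : ℝ :=
  (a ^ 2 * (∑ ℓ ∈ Finset.range i, h1 ℓ) ^ 2 +
      b ^ 2 * (∑ ℓ ∈ Finset.range j, h2 ℓ) ^ 2 +
      c ^ 2 * (∑ ℓ ∈ Finset.range k, h3 ℓ) ^ 2) ^ (q / 2)

/-- Index type for the vectorization: `i` (the `Fin N1` component) varies fastest. -/
abbrev Idx (N1 N2 N3 : ℕ) := Fin N3 × Fin N2 × Fin N1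

/-- `φ` as a function of the vectorized index. -/
noncomputable def phiVec (N1 N2 N3 : ℕ) (a b c q : ℝ) (h1 h2 h3 : ℕ → ℝ)
    (p : Idx N1 N2 N3) : ℝ :=
  phi a b c q h1 h2 h3 ((p.2.2 : ℕ) + 1) ((p.2.1 : ℕ) + 1) ((p.1 : ℕ) + 1)

/-- The diagonal matrix `B` with entries `φ_{i,j,k}⁻¹`. -/
noncomputable def Bdiag (N1 N2 N3 : ℕ) (a b c q : ℝ) (h1 h2 h3 : ℕ → ℝ) :
    Matrix (Idx N1 N2 N3) (Idx N1 N2 N3) ℝ :=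
  Matrix.diagonal fun p => (phiVec N1 N2 N3 a b c q h1 h2 h3 p)⁻¹

/-- The matrices `M1, M2, M3`. -/
noncomputable def Mmat (N1 N2 N3 : ℕ) (a b c q : ℝ) (h1 h2 h3 : ℕ → ℝ) :
    Fin 3 → Matrix (Idx N1 N2 N3) (Idx N1 N2 N3) ℝ :=
  ![(a ^ 2)⁻¹ •
      (Bdiag N1 N2 N3 a b c q h1 h2 h3 *
        ((1 : Matrix (Fin N3) (Fin N3) ℝ) ⊗ₖ
          ((1 : Matrix (Fin N2) (Fin N2) ℝ) ⊗ₖ tridiag N1 h1))),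
    (b ^ 2)⁻¹ •
      (Bdiag N1 N2 N3 a b c q h1 h2 h3 *
        ((1 : Matrix (Fin N3) (Fin N3) ℝ) ⊗ₖ
          (tridiag N2 h2 ⊗ₖ (1 : Matrix (Fin N1) (Fin N1) ℝ)))),
    (c ^ 2)⁻¹ •
      (Bdiag N1 N2 N3 a b c q h1 h2 h3 *
        (tridiag N3 h3 ⊗ₖ
          ((1 : Matrix (Fin N2) (Fin N2) ℝ) ⊗ₖ (1 : Matrix (Fin N1) (Fin N1) ℝ))))]

/-- The minimum of the mesh steps `h σ j`, `j = 0, …, N`, in one direction. -/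
noncomputable def dirMin (N : ℕ) (h : ℕ → ℝ) : ℝ :=
  (Finset.range (N + 1)).inf' Finset.nonempty_range_add_one h

/-- The maximum of the mesh steps in one direction. -/
noncomputable def dirMax (N : ℕ) (h : ℕ → ℝ) : ℝ :=
  (Finset.range (N + 1)).sup' Finset.nonempty_range_add_one h

/-- `h = min{h_{σ,j}}`, the global minimal mesh step. -/
noncomputable def meshMin (N1 N2 N3 : ℕ) (h1 h2 h3 : ℕ → ℝ) : ℝ :=
  min (dirMin N1 h1) (min (dirMin N2 h2) (dirMin N3 h3))

/-- `H = max{h_{σ,j}}`, the global maximal mesh step. -/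
noncomputable def meshMax (N1 N2 N3 : ℕ) (h1 h2 h3 : ℕ → ℝ) : ℝ :=
  max (dirMax N1 h1) (max (dirMax N2 h2) (dirMax N3 h3))

/-- `β_min = (h²/2)(a² h_{1,0}² + b² h_{2,0}² + c² h_{3,0}²)^{q/2}`. -/
noncomputable def betaMin (N1 N2 N3 : ℕ) (a b c q : ℝ) (h1 h2 h3 : ℕ → ℝ) : ℝ :=
  meshMin N1 N2 N3 h1 h2 h3 ^ 2 / 2 *
    (a ^ 2 * h1 0 ^ 2 + b ^ 2 * h2 0 ^ 2 + c ^ 2 * h3 0 ^ 2) ^ (q / 2)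

/-- The CFL condition `τ/β_min < min{a², b², c²}`. -/
def CFL (N1 N2 N3 : ℕ) (a b c q : ℝ) (h1 h2 h3 : ℕ → ℝ) (τ : ℝ) : Prop :=
  τ / betaMin N1 N2 N3 a b c q h1 h2 h3 < min (a ^ 2) (min (b ^ 2) (c ^ 2))

/-- `φ_min = min φ_{i,j,k}` (for the grid-sizes `nσ + 2 ≥ 2`). -/
noncomputable def phiMin (n1 n2 n3 : ℕ) (a b c q : ℝ) (h1 h2 h3 : ℕ → ℝ) : ℝ :=
  Finset.univ.inf' Finset.univ_nonempty
    (phiVec (n1 + 2) (n2 + 2) (n3 + 2) a b c q h1 h2 h3)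

/-- The nonlinear source term `g`, acting componentwise: `g(v)_p = f(v_p)/φ_p`. -/
noncomputable def gvec (N1 N2 N3 : ℕ) (a b c q : ℝ) (h1 h2 h3 : ℕ → ℝ) (f : ℝ → ℝ)
    (v : Idx N1 N2 N3 → ℝ) : Idx N1 N2 N3 → ℝ :=
  fun p => f (v p) / phiVec N1 N2 N3 a b c q h1 h2 h3 p

/-- The LOD propagator
`Φ(τ) = ∏_{σ=1}^3 (I − (τ/2)M_σ)⁻¹ (I + (τ/2)M_σ)`. -/
noncomputable def Phi (N1 N2 N3 : ℕ) (a b c q : ℝ) (h1 h2 h3 : ℕ → ℝ) (τ : ℝ) :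
    Matrix (Idx N1 N2 N3) (Idx N1 N2 N3) ℝ :=
  (1 - (τ / 2) • Mmat N1 N2 N3 a b c q h1 h2 h3 0)⁻¹ *
    (1 + (τ / 2) • Mmat N1 N2 N3 a b c q h1 h2 h3 0) *
  ((1 - (τ / 2) • Mmat N1 N2 N3 a b c q h1 h2 h3 1)⁻¹ *
    (1 + (τ / 2) • Mmat N1 N2 N3 a b c q h1 h2 h3 1)) *
  ((1 - (τ / 2) • Mmat N1 N2 N3 a b c q h1 h2 h3 2)⁻¹ *
    (1 + (τ / 2) • Mmat N1 N2 N3 a b c q h1 h2 h3 2))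

theorem isHermitian_symPart {m : Type*} [Fintype m] (A : Matrix m m ℝ) :
    (((2 : ℝ)⁻¹ • (A + Aᵀ))).IsHermitian := by
  show _ᴴ = _
  ext i j
  simp [Matrix.conjTranspose_apply, Matrix.transpose_apply, Matrix.add_apply]
  ring

/-- The logarithmic norm associated with the spectral norm:
`μ(A) = λ_max((A + Aᵀ)/2)`. -/
noncomputable def logNorm {m : Type*} [Fintype m] [DecidableEq m]
    (A : Matrix m m ℝ) : ℝ :=
  ⨆ i, (isHermitian_symPart A).eigenvalues i

/-- The Euclidean (`ℓ²`) norm of a vector. -/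
noncomputable def vecNorm {m : Type*} [Fintype m] (x : m → ℝ) : ℝ :=
  Real.sqrt (∑ i, x i ^ 2)

end Kawarada

theorem sum_ite_le_of_subsingleton {ι R : Type*} [Fintype ι] [Semiring R] [PartialOrder R]
    [IsOrderedRing R] {P : ι → Prop} [DecidablePred P] (hP : ∀ p r, P p → P r → p = r)
    {v : R} (hv : 0 ≤ v) : ∑ p, (if P p then v else 0) ≤ v := by
  rw [Finset.sum_ite, Finset.sum_const_zero, add_zero, Finset.sum_const, nsmul_eq_mul]
  have hcard : (Finset.univ.filter P).card ≤ 1 := Finset.card_le_one.mpr fun p hp r hr =>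
    hP p r (Finset.mem_filter.mp hp).2 (Finset.mem_filter.mp hr).2
  exact mul_le_of_le_one_left hv (by simpa using Nat.mono_cast (α := R) hcard)

namespace Matrix

variable {m n R : Type*} [Fintype m] [Field R] [LinearOrder R]

/-- Monotone in the sense of Collatz. -/
def IsMonotone (A : Matrix m m R) : Prop :=
  ∀ x : m → R, (∀ p, 0 ≤ (A *ᵥ x) p) → ∀ p, 0 ≤ x p

theorem isMonotone_of_offDiag_nonpos_of_rowSum_pos [IsStrictOrderedRing R] {A : Matrix m m R}
    (hoff : ∀ p r, p ≠ r → A p r ≤ 0) (hrow : ∀ p, 0 < ∑ r, A p r) : A.IsMonotone := by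
  intro x hx p
  obtain ⟨p₀, -, hmin⟩ := Finset.exists_min_image Finset.univ x ⟨p, Finset.mem_univ p⟩
  suffices 0 ≤ x p₀ from this.trans (hmin p (Finset.mem_univ p))
  by_contra! hneg
  have hle : (A *ᵥ x) p₀ ≤ (∑ r, A p₀ r) * x p₀ := by
    rw [mulVec, dotProduct, Finset.sum_mul]
    refine Finset.sum_le_sum fun r _ => ?_
    rcases eq_or_ne p₀ r with rfl | hr
    · exact le_rfl
    · exact mul_le_mul_of_nonpos_left (hmin r (Finset.mem_univ r)) (hoff p₀ r hr)
  linarith [hx p₀, mul_neg_of_pos_of_neg (hrow p₀) hneg]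

namespace IsMonotone

variable [DecidableEq m] [IsStrictOrderedRing R] {A : Matrix m m R}

theorem isUnit (hA : A.IsMonotone) : IsUnit A := by
  refine mulVec_injective_iff_isUnit.mp fun x y hxy => funext fun p => ?_
  have hzero : A *ᵥ (x - y) = 0 := by rw [mulVec_sub, hxy, sub_self]
  have h₁ := hA (x - y) (by simp [hzero]) p
  have h₂ := hA (y - x) (by rw [← neg_sub, mulVec_neg, hzero]; simp) p
  simp only [Pi.sub_apply] at h₁ h₂
  linarith

theorem inv_nonneg (hA : A.IsMonotone) (p r : m) : 0 ≤ A⁻¹ p r := by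
  have hcol : A *ᵥ (A⁻¹ *ᵥ Pi.single r 1) = Pi.single r 1 := by
    rw [mulVec_mulVec, mul_nonsing_inv A (A.isUnit_iff_isUnit_det.mp hA.isUnit), one_mulVec]
  have := hA _ (fun s => by rw [hcol, Pi.single_apply]; split_ifs <;> norm_num) p
  simpa [mulVec_single] using this

end IsMonotone

/-- The sub-intensity matrices of phase-type distributions: `-K` is a Z-matrix with
nonnegative row sums. -/
structure IsSubintensity (K : Matrix m m R) : Prop where
  offDiag_nonneg : ∀ p r, p ≠ r → 0 ≤ K p r
  rowSum_nonpos : ∀ p, ∑ r, K p r ≤ 0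

namespace IsSubintensity

variable {K : Matrix m m R}

theorem smul [IsStrictOrderedRing R] (hK : IsSubintensity K) {c : R} (hc : 0 ≤ c) :
    IsSubintensity (c • K) where
  offDiag_nonneg p r hpr := mul_nonneg hc (hK.offDiag_nonneg p r hpr)
  rowSum_nonpos p := by
    simp only [smul_apply, smul_eq_mul, ← Finset.mul_sum]
    exact mul_nonpos_of_nonneg_of_nonpos hc (hK.rowSum_nonpos p)

theorem diagonal_mul [DecidableEq m] [IsStrictOrderedRing R] (hK : IsSubintensity K)
    {w : m → R} (hw : ∀ p, 0 ≤ w p) : IsSubintensity (diagonal w * K) where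
  offDiag_nonneg p r hpr := by
    rw [Matrix.diagonal_mul]
    exact mul_nonneg (hw p) (hK.offDiag_nonneg p r hpr)
  rowSum_nonpos p := by
    simp only [Matrix.diagonal_mul, ← Finset.mul_sum]
    exact mul_nonpos_of_nonneg_of_nonpos (hw p) (hK.rowSum_nonpos p)

theorem one_kronecker [Fintype n] [DecidableEq n] (hK : IsSubintensity K) :
    IsSubintensity ((1 : Matrix n n R) ⊗ₖ K) where
  offDiag_nonneg p r hpr := by
    rw [kroneckerMap_apply]
    rcases eq_or_ne p.1 r.1 with h | h
    · rw [h, one_apply_eq, one_mul]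
      exact hK.offDiag_nonneg _ _ fun h' => hpr (Prod.ext h h')
    · rw [one_apply_ne h, zero_mul]
  rowSum_nonpos p := by
    simpa [Fintype.sum_prod_type, kroneckerMap_apply, one_apply] using hK.rowSum_nonpos p.2

theorem kronecker_one [Fintype n] [DecidableEq n] (hK : IsSubintensity K) :
    IsSubintensity (K ⊗ₖ (1 : Matrix n n R)) where
  offDiag_nonneg p r hpr := by
    rw [kroneckerMap_apply]
    rcases eq_or_ne p.2 r.2 with h | h
    · rw [h, one_apply_eq, mul_one]
      exact hK.offDiag_nonneg _ _ fun h' => hpr (Prod.ext h' h)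
    · rw [one_apply_ne h, mul_zero]
  rowSum_nonpos p := by
    simpa [Fintype.sum_prod_type, kroneckerMap_apply, one_apply] using hK.rowSum_nonpos p.1

theorem isMonotone_one_sub [DecidableEq m] [IsStrictOrderedRing R] (hK : IsSubintensity K) :
    (1 - K).IsMonotone := by
  refine isMonotone_of_offDiag_nonpos_of_rowSum_pos (fun p r hpr => ?_) fun p => ?_
  · simpa [one_apply_ne hpr] using hK.offDiag_nonneg p r hpr
  · simp only [sub_apply, Finset.sum_sub_distrib, one_apply, Finset.sum_ite_eq,
      Finset.mem_univ, if_true]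
    linarith [hK.rowSum_nonpos p]

end IsSubintensity

end Matrix

namespace Kawarada

theorem tridiag_apply_eq (N : ℕ) (h : ℕ → ℝ) (i p : Fin N) :
    tridiag N h i p =
      (if i = p then -2 / (h i * h ((i : ℕ) + 1)) else 0) +
      (if (i : ℕ) = p + 1 then 2 / (h i * (h i + h ((i : ℕ) + 1))) else 0) +
      (if (p : ℕ) = i + 1 then 2 / (h ((i : ℕ) + 1) * (h i + h ((i : ℕ) + 1))) else 0) := by
  simp only [tridiag, of_apply, ← Fin.val_inj]
  split_ifs <;> first | omega | ring

theorem isSubintensity_tridiag {N : ℕ} {h : ℕ → ℝ} (hpos : ∀ j ≤ N, 0 < h j) :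
    IsSubintensity (tridiag N h) where
  offDiag_nonneg i p hip := by
    have hi := hpos i i.2.le
    have hi' := hpos (i + 1) i.2
    rw [tridiag_apply_eq, if_neg hip, zero_add]
    split_ifs <;> positivity
  rowSum_nonpos i := by
    have hi := hpos i i.2.le
    have hi' := hpos (i + 1) i.2
    simp only [tridiag_apply_eq, Finset.sum_add_distrib, Finset.sum_ite_eq, Finset.mem_univ,
      if_true]
    have hl := sum_ite_le_of_subsingleton (P := fun p : Fin N => (i : ℕ) = p + 1)
      (fun p r hp hr => Fin.ext (by omega))
      (by positivity : 0 ≤ 2 / (h i * (h i + h ((i : ℕ) + 1))))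
    have hr := sum_ite_le_of_subsingleton (P := fun p : Fin N => (p : ℕ) = i + 1)
      (fun p r hp hr => Fin.ext (by omega))
      (by positivity : 0 ≤ 2 / (h ((i : ℕ) + 1) * (h i + h ((i : ℕ) + 1))))
    have hzero : -2 / (h i * h ((i : ℕ) + 1)) + 2 / (h i * (h i + h ((i : ℕ) + 1))) +
        2 / (h ((i : ℕ) + 1) * (h i + h ((i : ℕ) + 1))) = 0 := by
      field_simp
      ring
    linarith

theorem phiVec_nonneg (N1 N2 N3 : ℕ) (a b c q : ℝ) (h1 h2 h3 : ℕ → ℝ) (p : Idx N1 N2 N3) :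
    0 ≤ phiVec N1 N2 N3 a b c q h1 h2 h3 p :=
  Real.rpow_nonneg (by positivity) _

theorem isSubintensity_Mmat {N1 N2 N3 : ℕ} (a b c q : ℝ) {h1 h2 h3 : ℕ → ℝ}
    (hpos1 : ∀ j ≤ N1, 0 < h1 j) (hpos2 : ∀ j ≤ N2, 0 < h2 j)
    (hpos3 : ∀ j ≤ N3, 0 < h3 j) (σ : Fin 3) : IsSubintensity (Mmat N1 N2 N3 a b c q h1 h2 h3 σ) := by
  have hB : ∀ p, 0 ≤ (phiVec N1 N2 N3 a b c q h1 h2 h3 p)⁻¹ :=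
    fun p => inv_nonneg.mpr (phiVec_nonneg N1 N2 N3 a b c q h1 h2 h3 p)
  fin_cases σ
  · exact (((isSubintensity_tridiag hpos1).one_kronecker.one_kronecker).diagonal_mul hB).smul
      (by positivity)
  · exact (((isSubintensity_tridiag hpos2).kronecker_one.one_kronecker).diagonal_mul hB).smul
      (by positivity)
  · simp only [Fin.reduceFinMk, Mmat, cons_val, one_kronecker_one]
    exact (((isSubintensity_tridiag hpos3).kronecker_one).diagonal_mul hB).smul
      (by positivity)

theorem statement3_general (n1 n2 n3 : ℕ) (a b c q : ℝ)
    (h1 h2 h3 : ℕ → ℝ)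
    (hpos1 : ∀ j ≤ n1 + 2, 0 < h1 j)
    (hpos2 : ∀ j ≤ n2 + 2, 0 < h2 j)
    (hpos3 : ∀ j ≤ n3 + 2, 0 < h3 j)
    (τ : ℝ) (hτ : 0 < τ) :
    ∀ σ : Fin 3,
      IsUnit (1 - (τ / 2) • Mmat (n1 + 2) (n2 + 2) (n3 + 2) a b c q h1 h2 h3 σ) ∧
      (∀ x : Idx (n1 + 2) (n2 + 2) (n3 + 2) → ℝ,
        (∀ p, 0 ≤ (1 - (τ / 2) • Mmat (n1 + 2) (n2 + 2) (n3 + 2) a b c q h1 h2 h3 σ).mulVec x p) → ∀ p, 0 ≤ x p) ∧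
      ∀ p r, 0 ≤ (1 - (τ / 2) • Mmat (n1 + 2) (n2 + 2) (n3 + 2) a b c q h1 h2 h3 σ)⁻¹ p r :=
  fun σ =>
    have hA := ((isSubintensity_Mmat a b c q hpos1 hpos2 hpos3 σ).smul
      (by positivity : (0 : ℝ) ≤ τ / 2)).isMonotone_one_sub
    ⟨hA.isUnit, hA, hA.inv_nonneg⟩

/-- under the CFL condition, `I − (τ/2)M_σ` is nonsingular and monotone
(`(I − (τ/2)M_σ)x ≥ 0` entrywise implies `x ≥ 0` entrywise); equivalently its inverse
is entrywise nonnegative. -/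
theorem statement3 (n1 n2 n3 : ℕ) (a b c q : ℝ)
    (ha : 0 < a) (hb : 0 < b) (hc : 0 < c) (hq0 : 0 ≤ q) (hq2 : q ≤ 2)
    (h1 h2 h3 : ℕ → ℝ)
    (hpos1 : ∀ j ≤ n1 + 2, 0 < h1 j)
    (hpos2 : ∀ j ≤ n2 + 2, 0 < h2 j)
    (hpos3 : ∀ j ≤ n3 + 2, 0 < h3 j)
    (τ : ℝ) (hτ : 0 < τ) (hCFL : CFL (n1 + 2) (n2 + 2) (n3 + 2) a b c q h1 h2 h3 τ) :
    ∀ σ : Fin 3,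
      IsUnit (1 - (τ / 2) • Mmat (n1 + 2) (n2 + 2) (n3 + 2) a b c q h1 h2 h3 σ) ∧
      (∀ x : Idx (n1 + 2) (n2 + 2) (n3 + 2) → ℝ,
        (∀ p, 0 ≤ (1 - (τ / 2) • Mmat (n1 + 2) (n2 + 2) (n3 + 2) a b c q h1 h2 h3 σ).mulVec x p) → ∀ p, 0 ≤ x p) ∧
      ∀ p r, 0 ≤ (1 - (τ / 2) • Mmat (n1 + 2) (n2 + 2) (n3 + 2) a b c q h1 h2 h3 σ)⁻¹ p r :=
  statement3_general n1 n2 n3 a b c q h1 h2 h3 hpos1 hpos2 hpos3 τ hτ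

end Kawarada
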